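/- arXiv:2312.02176 — 2 statements merged into one kernel-verified Lean document; each statement's English description precedes it below -/
import Mathlib

section
/- Let F(E) = ∑_{i1 < i2} ∑_{j=1}^L A_{i1,i2} e_{i1,j} e_{i2,j} be defined over matrices E ∈ [0,1]^{N×L} with each row summing to 1 (row-stochastic matrices), where A_{i1,i2} ≥ 0. Then the minimum of F over this feasible set is attained at a matrix E whose entries are all in {0,1}, i.e., at a vertex of the product of simplices. -/
/-- The CS objective `F(E) = ∑_{i1<i2} ∑_j A_{i1,i2} E_{i1,j} E_{i2,j}`. -/
noncomputable def csObj (N L : ℕ) (A : Fin N → Fin N → ℝ)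
    (E : Fin N → Fin L → ℝ) : ℝ :=
  ∑ p ∈ (Finset.univ ×ˢ Finset.univ).filter (fun p : Fin N × Fin N => p.1 < p.2),
    ∑ j, A p.1 p.2 * E p.1 j * E p.2 j

/-- Row-stochastic feasibility. -/
def rowStochastic (N L : ℕ) (E : Fin N → Fin L → ℝ) : Prop :=
  (∀ i j, 0 ≤ E i j) ∧ (∀ i, ∑ j, E i j = 1)

open Finset

private lemma csObj_split {N L : ℕ} (A : Fin N → Fin N → ℝ)
    (hsym : ∀ i1 i2, A i1 i2 = A i2 i1) (i : Fin N) (E : Fin N → Fin L → ℝ) :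
    csObj N L A E =
      (∑ j, E i j * ∑ k ∈ univ.filter (fun k => k ≠ i), A i k * E k j) +
      ∑ p ∈ (univ ×ˢ univ).filter
          (fun p : Fin N × Fin N => p.1 < p.2 ∧ p.1 ≠ i ∧ p.2 ≠ i),
        ∑ j, A p.1 p.2 * E p.1 j * E p.2 j := by
  classical
  unfold csObj
  rw [← Finset.sum_filter_add_sum_filter_not
      ((univ ×ˢ univ).filter (fun p : Fin N × Fin N => p.1 < p.2))
      (fun p => p.1 = i ∨ p.2 = i)]
  congr 1
  · -- the part of the sum involving row i
    have h1 : (∑ j, E i j * ∑ k ∈ univ.filter (fun k => k ≠ i), A i k * E k j)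
        = ∑ k ∈ univ.filter (fun k => k ≠ i), ∑ j, A i k * E i j * E k j := by
      simp_rw [Finset.mul_sum]
      rw [Finset.sum_comm]
      apply Finset.sum_congr rfl; intro k _
      apply Finset.sum_congr rfl; intro j _
      ring
    rw [h1]
    refine Finset.sum_bij' (fun p _ => if p.1 = i then p.2 else p.1)
      (fun k _ => if i < k then (i, k) else (k, i)) ?_ ?_ ?_ ?_ ?_
    · -- hi : image of p is in the k-set
      rintro ⟨p1, p2⟩ hp
      simp only [mem_filter, mem_product, mem_univ, true_and] at hp
      obtain ⟨hlt, hor⟩ := hp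
      simp only [mem_filter, mem_univ, true_and]
      by_cases h1 : p1 = i
      · simp only [h1, if_true]
        exact ne_of_gt (h1 ▸ hlt)
      · simp only [h1, if_false]
        exact h1
    · -- hj : image of k is in the pair-set
      intro k hk
      simp only [mem_filter, mem_univ, true_and] at hk
      by_cases h : i < k
      · simp only [if_pos h]
        simp only [mem_filter, mem_product, mem_univ, true_and]
        exact ⟨h, Or.inl trivial⟩
      · have hki : k < i := lt_of_le_of_ne (not_lt.mp h) hk
        simp only [if_neg h]
        simp only [mem_filter, mem_product, mem_univ, true_and]
        exact ⟨hki, Or.inr trivial⟩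
    · -- left_inv : f (g p) = p
      rintro ⟨p1, p2⟩ hp
      simp only [mem_filter, mem_product, mem_univ, true_and] at hp
      obtain ⟨hlt, hor⟩ := hp
      by_cases h1 : p1 = i
      · have h2 : i < p2 := h1 ▸ hlt
        simp only [h1, if_true, h2]
      · have h2 : p2 = i := hor.resolve_left h1
        have hni : ¬ i < p1 := by rw [← h2]; exact not_lt.mpr hlt.le
        simp only [h1, if_false, hni, if_true, h2]
    · -- right_inv : g (f k) = k
      intro k hk
      simp only [mem_filter, mem_univ, true_and] at hk
      by_cases h : i < k
      · simp [h, ne_of_gt h]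
      · simp [h, hk]
    · -- values agree
      rintro ⟨p1, p2⟩ hp
      simp only [mem_filter, mem_product, mem_univ, true_and] at hp
      obtain ⟨hlt, hor⟩ := hp
      by_cases h1 : p1 = i
      · simp only [h1, if_true]
      · have h2 : p2 = i := hor.resolve_left h1
        simp only [h1, if_false]
        subst h2
        apply Finset.sum_congr rfl
        intro j _
        rw [hsym p1 p2]
        ring
  · apply Finset.sum_congr _ (fun _ _ => rfl)
    rw [Finset.filter_filter]
    apply Finset.filter_congr
    intro p _
    simp [not_or, and_assoc]

private lemma row_round {N L : ℕ} (hL : 1 ≤ L) (A : Fin N → Fin N → ℝ)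
    (hsym : ∀ i1 i2, A i1 i2 = A i2 i1)
    (E' : Fin N → Fin L → ℝ) (hE' : rowStochastic N L E') (i : Fin N) :
    ∃ E : Fin N → Fin L → ℝ, rowStochastic N L E ∧ (∀ k, k ≠ i → E k = E' k) ∧
      (∀ j, E i j = 0 ∨ E i j = 1) ∧ csObj N L A E ≤ csObj N L A E' := by
  classical
  have hLne : (univ : Finset (Fin L)).Nonempty := ⟨⟨0, hL⟩, mem_univ _⟩
  set c : Fin L → ℝ := fun j => ∑ k ∈ univ.filter (fun k => k ≠ i), A i k * E' k j with hc
  obtain ⟨j0, -, hj0⟩ := Finset.exists_min_image univ c hLne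
  set E : Fin N → Fin L → ℝ :=
    Function.update E' i (fun j => if j = j0 then (1:ℝ) else 0) with hE
  have hag : ∀ k, k ≠ i → E k = E' k := fun k hk => Function.update_of_ne hk _ _
  have hrowi : ∀ j, E i j = if j = j0 then (1:ℝ) else 0 := fun j => by
    rw [hE, Function.update_self]
  refine ⟨E, ⟨?_, ?_⟩, hag, ?_, ?_⟩
  · intro k j
    by_cases hk : k = i
    · subst hk; rw [hrowi]; split <;> norm_num
    · rw [hag k hk]; exact hE'.1 k j
  · intro k
    by_cases hk : k = i
    · subst hk
      simp only [hrowi]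
      rw [Finset.sum_ite_eq' univ j0 (fun _ => (1:ℝ))]
      simp
    · rw [hag k hk]; exact hE'.2 k
  · intro j; rw [hrowi]; split
    · exact Or.inr rfl
    · exact Or.inl rfl
  · rw [csObj_split A hsym i E, csObj_split A hsym i E']
    have hcE : ∀ j, (∑ k ∈ univ.filter (fun k => k ≠ i), A i k * E k j) = c j := by
      intro j
      apply Finset.sum_congr rfl
      intro k hk
      simp only [mem_filter, mem_univ, true_and] at hk
      rw [hag k hk]
    have hR : (∑ p ∈ (univ ×ˢ univ).filter
          (fun p : Fin N × Fin N => p.1 < p.2 ∧ p.1 ≠ i ∧ p.2 ≠ i),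
        ∑ j, A p.1 p.2 * E p.1 j * E p.2 j) =
        ∑ p ∈ (univ ×ˢ univ).filter
          (fun p : Fin N × Fin N => p.1 < p.2 ∧ p.1 ≠ i ∧ p.2 ≠ i),
        ∑ j, A p.1 p.2 * E' p.1 j * E' p.2 j := by
      apply Finset.sum_congr rfl
      intro p hp
      simp only [mem_filter, mem_product, mem_univ, true_and] at hp
      rw [hag p.1 hp.2.1, hag p.2 hp.2.2]
    rw [hR]
    apply add_le_add_left
    simp_rw [hcE]
    have hL1 : (∑ j, E i j * c j) = c j0 := by
      have hterm : ∀ j : Fin L, E i j * c j = if j = j0 then c j else 0 := by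
        intro j
        rw [hrowi j]
        by_cases h : j = j0 <;> simp [h]
      rw [Finset.sum_congr rfl (fun j _ => hterm j), Finset.sum_ite_eq' univ j0 c]
      simp
    rw [hL1]
    calc c j0 = (∑ j, E' i j) * c j0 := by rw [hE'.2 i, one_mul]
      _ = ∑ j, E' i j * c j0 := by rw [Finset.sum_mul]
      _ ≤ ∑ j, E' i j * c j := by
          apply Finset.sum_le_sum
          intro j _
          exact mul_le_mul_of_nonneg_left (hj0 j (mem_univ j)) (hE'.1 i j)

private lemma round_all {N L : ℕ} (hL : 1 ≤ L) (A : Fin N → Fin N → ℝ)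
    (hsym : ∀ i1 i2, A i1 i2 = A i2 i1) (s : Finset (Fin N)) :
    ∀ E' : Fin N → Fin L → ℝ, rowStochastic N L E' →
      ∃ E, rowStochastic N L E ∧ (∀ i ∈ s, ∀ j, E i j = 0 ∨ E i j = 1) ∧
        csObj N L A E ≤ csObj N L A E' := by
  classical
  induction s using Finset.induction_on with
  | empty => intro E' h; exact ⟨E', h, by simp, le_refl _⟩
  | @insert a s hni ih =>
    intro E' h
    obtain ⟨E1, h1, hbin1, hle1⟩ := ih E' h
    obtain ⟨E2, h2, hag, hbin2, hle2⟩ := row_round hL A hsym E1 h1 a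
    refine ⟨E2, h2, ?_, hle2.trans hle1⟩
    intro i hi j
    rcases Finset.mem_insert.mp hi with rfl | hi
    · exact hbin2 j
    · have hne : i ≠ a := fun hc => hni (hc ▸ hi)
      rw [hag i hne]
      exact hbin1 i hi j

private lemma binary_row {L : ℕ} (f : Fin L → ℝ) (hb : ∀ j, f j = 0 ∨ f j = 1)
    (hs : ∑ j, f j = 1) : ∃ j0, ∀ j, f j = if j = j0 then (1:ℝ) else 0 := by
  classical
  have h1 : ∑ j, f j = ∑ j ∈ univ.filter (fun j => f j = 1), (1:ℝ) := by
    rw [Finset.sum_filter]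
    apply Finset.sum_congr rfl
    intro j _
    rcases hb j with h | h <;> simp [h]
  rw [h1, Finset.sum_const, nsmul_eq_mul, mul_one] at hs
  have hcard : (univ.filter (fun j => f j = 1)).card = 1 := by exact_mod_cast hs
  obtain ⟨j0, hj0⟩ := Finset.card_eq_one.mp hcard
  refine ⟨j0, fun j => ?_⟩
  by_cases h : j = j0
  · subst h
    have : j ∈ univ.filter (fun j => f j = 1) := hj0 ▸ Finset.mem_singleton_self j
    simp only [mem_filter] at this
    simp [this.2]
  · simp only [h, if_false]
    rcases hb j with h' | h'
    · exact h'
    · exfalso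
      have : j ∈ univ.filter (fun j => f j = 1) := by simp [h']
      rw [hj0, Finset.mem_singleton] at this
      exact h this

theorem min_at_binary (N L : ℕ) (hL : 1 ≤ L) (A : Fin N → Fin N → ℝ)
    (hA : ∀ i1 i2, 0 ≤ A i1 i2) (hsym : ∀ i1 i2, A i1 i2 = A i2 i1) :
    ∃ E : Fin N → Fin L → ℝ, rowStochastic N L E ∧
      (∀ i j, E i j = 0 ∨ E i j = 1) ∧
      ∀ E' : Fin N → Fin L → ℝ, rowStochastic N L E' → csObj N L A E ≤ csObj N L A E' := by
  classical
  haveI : Nonempty (Fin L) := ⟨⟨0, hL⟩⟩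
  have hne : (univ : Finset (Fin N → Fin L)).Nonempty := Finset.univ_nonempty
  obtain ⟨σ0, -, hσ0⟩ := Finset.exists_min_image (univ : Finset (Fin N → Fin L))
    (fun σ => csObj N L A (fun i j => if j = σ i then (1:ℝ) else 0)) hne
  refine ⟨fun i j => if j = σ0 i then (1:ℝ) else 0, ⟨?_, ?_⟩, ?_, ?_⟩
  · intro i j
    show (0:ℝ) ≤ if j = σ0 i then (1:ℝ) else 0
    split <;> norm_num
  · intro i
    show (∑ j, if j = σ0 i then (1:ℝ) else 0) = 1
    rw [Finset.sum_ite_eq' univ (σ0 i) (fun _ => (1:ℝ))]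
    simp
  · intro i j
    show (if j = σ0 i then (1:ℝ) else 0) = 0 ∨ (if j = σ0 i then (1:ℝ) else 0) = 1
    split
    · exact Or.inr rfl
    · exact Or.inl rfl
  · intro E' hE'
    obtain ⟨E, hEfeas, hbin, hle⟩ := round_all hL A hsym (univ : Finset (Fin N)) E' hE'
    have hrow : ∀ i, ∃ j0, ∀ j, E i j = if j = j0 then (1:ℝ) else 0 := fun i =>
      binary_row (E i) (hbin i (mem_univ i)) (hEfeas.2 i)
    choose σ hσ using hrow
    have hEeq : E = fun i j => if j = σ i then (1:ℝ) else 0 := by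
      funext i j; exact hσ i j
    calc csObj N L A (fun i j => if j = σ0 i then (1:ℝ) else 0)
        ≤ csObj N L A (fun i j => if j = σ i then (1:ℝ) else 0) := hσ0 σ (mem_univ σ)
      _ = csObj N L A E := by rw [← hEeq]
      _ ≤ csObj N L A E' := hle
end

section
/- The minimum of F over binary row-stochastic matrices E ∈ {0,1}^{N×L} equals the minimum of F over all row-stochastic matrices E ∈ [0,1]^{N×L}, where F(E) = ∑_{i1<i2} ∑_{j=1}^L A_{i1,i2} e_{i1,j} e_{i2,j} and A has nonnegative entries. -/
open Finset

lemma csObj_nonneg (N L : ℕ) (A : Fin N → Fin N → ℝ) (hA : ∀ i1 i2, 0 ≤ A i1 i2)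
    (E : Fin N → Fin L → ℝ) (hE : ∀ i j, 0 ≤ E i j) : 0 ≤ csObj N L A E := by
  apply Finset.sum_nonneg
  intro p _
  apply Finset.sum_nonneg
  intro j _
  exact mul_nonneg (mul_nonneg (hA _ _) (hE _ _)) (hE _ _)

lemma key_sum (N L : ℕ) (E : Fin N → Fin L → ℝ)
    (hE1 : ∀ i, ∑ j, E i j = 1)
    (i1 i2 : Fin N) (hne : i1 ≠ i2) (j : Fin L) :
    ∑ f : Fin N → Fin L, (∏ i, E i (f i)) *
      ((if f i1 = j then (1:ℝ) else 0) * (if f i2 = j then (1:ℝ) else 0))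
      = E i1 j * E i2 j := by
  classical
  set g : Fin N → Fin L → ℝ :=
    fun i k => if i = i1 ∨ i = i2 then (if k = j then E i k else 0) else E i k with hg
  have h1 : ∀ f : Fin N → Fin L,
      (∏ i, E i (f i)) * ((if f i1 = j then (1:ℝ) else 0) * (if f i2 = j then (1:ℝ) else 0))
        = ∏ i, g i (f i) := by
    intro f
    by_cases h1 : f i1 = j
    · by_cases h2 : f i2 = j
      · have heq : ∀ i : Fin N, g i (f i) = E i (f i) := by
          intro i
          by_cases hi : i = i1 ∨ i = i2
          · rcases hi with hi | hi <;> subst hi <;> simp [hg, h1, h2]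
          · simp [hg, hi]
        rw [if_pos h1, if_pos h2, mul_one, mul_one]
        exact (Finset.prod_congr rfl fun i _ => heq i).symm
      · have hz : g i2 (f i2) = 0 := by simp [hg, h2]
        rw [if_neg h2, mul_zero, mul_zero]
        exact (Finset.prod_eq_zero (Finset.mem_univ i2) hz).symm
    · have hz : g i1 (f i1) = 0 := by simp [hg, h1]
      rw [if_neg h1, zero_mul, mul_zero]
      exact (Finset.prod_eq_zero (Finset.mem_univ i1) hz).symm
  calc ∑ f : Fin N → Fin L, (∏ i, E i (f i)) *
        ((if f i1 = j then (1:ℝ) else 0) * (if f i2 = j then (1:ℝ) else 0))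
      = ∑ f : Fin N → Fin L, ∏ i, g i (f i) := by
        exact Finset.sum_congr rfl fun f _ => h1 f
    _ = ∏ i, ∑ k, g i k := by
        rw [Finset.prod_univ_sum]
        rw [Fintype.piFinset_univ]
    _ = E i1 j * E i2 j := by
        have hgsum : ∀ i : Fin N, (∑ k, g i k)
            = if i = i1 then E i1 j else if i = i2 then E i2 j else 1 := by
          intro i
          by_cases hi1 : i = i1
          · subst hi1; simp [hg]
          · by_cases hi2 : i = i2
            · subst hi2; simp [hg, hi1]
            · simp [hg, hi1, hi2, hE1 i]
        calc ∏ i, ∑ k, g i k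
            = ∏ i, (if i = i1 then E i1 j else if i = i2 then E i2 j else 1) := by
              exact Finset.prod_congr rfl fun i _ => hgsum i
          _ = ∏ i ∈ ({i1, i2} : Finset (Fin N)),
                (if i = i1 then E i1 j else if i = i2 then E i2 j else 1) := by
              symm
              apply Finset.prod_subset (Finset.subset_univ _)
              intro i _ hi
              simp only [Finset.mem_insert, Finset.mem_singleton, not_or] at hi
              rw [if_neg hi.1, if_neg hi.2]
          _ = E i1 j * E i2 j := by
              rw [Finset.prod_pair hne]
              rw [if_pos rfl, if_neg (Ne.symm hne), if_pos rfl]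

lemma roundCS (N L : ℕ) (hL : 1 ≤ L) (A : Fin N → Fin N → ℝ)
    (E : Fin N → Fin L → ℝ) (hE0 : ∀ i j, 0 ≤ E i j) (hE1 : ∀ i, ∑ j, E i j = 1) :
    ∃ E' : Fin N → Fin L → ℝ, (∀ i j, E' i j = 0 ∨ E' i j = 1) ∧ (∀ i, ∑ j, E' i j = 1) ∧
      csObj N L A E' ≤ csObj N L A E := by
  classical
  haveI : NeZero L := ⟨by omega⟩
  set B : (Fin N → Fin L) → Fin N → Fin L → ℝ :=
    fun f i j => if f i = j then (1:ℝ) else 0 with hB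
  set w : (Fin N → Fin L) → ℝ := fun f => ∏ i, E i (f i) with hw
  have hw0 : ∀ f, 0 ≤ w f := fun f => Finset.prod_nonneg fun i _ => hE0 i (f i)
  have hwsum : ∑ f : Fin N → Fin L, w f = 1 := by
    have : (∏ i : Fin N, ∑ j : Fin L, E i j)
        = ∑ f ∈ Fintype.piFinset (fun _ : Fin N => (Finset.univ : Finset (Fin L))),
            ∏ i, E i (f i) := Finset.prod_univ_sum _ _
    rw [Fintype.piFinset_univ] at this
    rw [hw, ← this]
    rw [Finset.prod_congr rfl fun i _ => hE1 i, Finset.prod_const_one]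
  have hmain : ∑ f : Fin N → Fin L, w f * csObj N L A (B f) = csObj N L A E := by
    have expand : ∀ f : Fin N → Fin L, w f * csObj N L A (B f)
        = ∑ p ∈ (Finset.univ ×ˢ Finset.univ).filter (fun p : Fin N × Fin N => p.1 < p.2),
            ∑ j, w f * (A p.1 p.2 * B f p.1 j * B f p.2 j) := by
      intro f
      unfold csObj
      rw [Finset.mul_sum]
      exact Finset.sum_congr rfl fun p _ => Finset.mul_sum _ _ _
    calc ∑ f : Fin N → Fin L, w f * csObj N L A (B f)
        = ∑ f : Fin N → Fin L,
            ∑ p ∈ (Finset.univ ×ˢ Finset.univ).filter (fun p : Fin N × Fin N => p.1 < p.2),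
              ∑ j, w f * (A p.1 p.2 * B f p.1 j * B f p.2 j) :=
          Finset.sum_congr rfl fun f _ => expand f
      _ = ∑ p ∈ (Finset.univ ×ˢ Finset.univ).filter (fun p : Fin N × Fin N => p.1 < p.2),
            ∑ f : Fin N → Fin L, ∑ j, w f * (A p.1 p.2 * B f p.1 j * B f p.2 j) :=
          Finset.sum_comm
      _ = ∑ p ∈ (Finset.univ ×ˢ Finset.univ).filter (fun p : Fin N × Fin N => p.1 < p.2),
            ∑ j, ∑ f : Fin N → Fin L, w f * (A p.1 p.2 * B f p.1 j * B f p.2 j) :=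
          Finset.sum_congr rfl fun p _ => Finset.sum_comm
      _ = csObj N L A E := by
          unfold csObj
          refine Finset.sum_congr rfl fun p hp => ?_
          have hne : p.1 ≠ p.2 := by
            simp only [Finset.mem_filter] at hp
            exact ne_of_lt hp.2
          refine Finset.sum_congr rfl fun j _ => ?_
          calc ∑ f : Fin N → Fin L, w f * (A p.1 p.2 * B f p.1 j * B f p.2 j)
              = ∑ f : Fin N → Fin L, A p.1 p.2 * (w f * (B f p.1 j * B f p.2 j)) :=
                Finset.sum_congr rfl fun f _ => by ring
            _ = A p.1 p.2 * ∑ f : Fin N → Fin L, w f * (B f p.1 j * B f p.2 j) := by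
                rw [Finset.mul_sum]
            _ = A p.1 p.2 * (E p.1 j * E p.2 j) := by
                rw [key_sum N L E hE1 p.1 p.2 hne j]
            _ = A p.1 p.2 * E p.1 j * E p.2 j := by ring
  -- pick the minimizing f
  obtain ⟨f0, _, hf0⟩ := Finset.exists_min_image (Finset.univ : Finset (Fin N → Fin L))
    (fun f => csObj N L A (B f)) ⟨fun _ => 0, Finset.mem_univ _⟩
  refine ⟨B f0, ?_, ?_, ?_⟩
  · intro i j
    by_cases h : f0 i = j <;> simp [hB, h]
  · intro i
    simp [hB]
  · calc csObj N L A (B f0) = (∑ f : Fin N → Fin L, w f) * csObj N L A (B f0) := by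
          rw [hwsum, one_mul]
      _ = ∑ f : Fin N → Fin L, w f * csObj N L A (B f0) := by rw [Finset.sum_mul]
      _ ≤ ∑ f : Fin N → Fin L, w f * csObj N L A (B f) := by
          apply Finset.sum_le_sum
          intro f _
          exact mul_le_mul_of_nonneg_left (hf0 f (Finset.mem_univ f)) (hw0 f)
      _ = csObj N L A E := hmain

theorem binary_min_eq_relaxed_min (N L : ℕ) (hL : 1 ≤ L)
    (A : Fin N → Fin N → ℝ) (hA : ∀ i1 i2, 0 ≤ A i1 i2)
    (hsym : ∀ i1 i2, A i1 i2 = A i2 i1) :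
    sInf (csObj N L A '' {E | (∀ i j, E i j = 0 ∨ E i j = 1) ∧ (∀ i, ∑ j, E i j = 1)})
      = sInf (csObj N L A '' {E | (∀ i j, 0 ≤ E i j) ∧ (∀ i, ∑ j, E i j = 1)}) := by
  classical
  haveI : NeZero L := ⟨by omega⟩
  set Sb := csObj N L A '' {E | (∀ i j, E i j = 0 ∨ E i j = 1) ∧ (∀ i, ∑ j, E i j = 1)}
  set Sr := csObj N L A '' {E | (∀ i j, 0 ≤ E i j) ∧ (∀ i, ∑ j, E i j = 1)}
  have hsub : Sb ⊆ Sr := by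
    rintro x ⟨E, ⟨h01, hs⟩, rfl⟩
    exact ⟨E, ⟨fun i j => by rcases h01 i j with h | h <;> simp [h], hs⟩, rfl⟩
  have hE0 : (fun (i : Fin N) (j : Fin L) => if j = (0 : Fin L) then (1:ℝ) else 0) ∈
      {E : Fin N → Fin L → ℝ | (∀ i j, E i j = 0 ∨ E i j = 1) ∧ (∀ i, ∑ j, E i j = 1)} := by
    constructor
    · intro i j; by_cases h : j = 0 <;> simp [h]
    · intro i; simp
  have hSbne : Sb.Nonempty := ⟨_, _, hE0, rfl⟩
  have hSrne : Sr.Nonempty := hSbne.mono hsub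
  have hbdd : BddBelow Sr := by
    refine ⟨0, ?_⟩
    rintro x ⟨E, ⟨h0, hs⟩, rfl⟩
    exact csObj_nonneg N L A hA E h0
  have hbddb : BddBelow Sb := hbdd.mono hsub
  apply le_antisymm
  · apply le_csInf hSrne
    rintro y ⟨E, ⟨h0, hs⟩, rfl⟩
    obtain ⟨E', hb, hs', hle⟩ := roundCS N L hL A E h0 hs
    exact le_trans (csInf_le hbddb ⟨E', ⟨hb, hs'⟩, rfl⟩) hle
  · exact csInf_le_csInf hbdd hSbne hsub
end
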